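/- Let s, n, K be positive integers, let d_{ik} ∈ {0,1} and z_{ik}, z_{ik0} ∈ ℝ^s (i = 1,…,n; k = 1,…,K) be such that for every i there exists k with d_{ik} = 1. Let N ≥ n be an integer, β ∈ ℝ^s, and p_1, …, p_n > 0 with ∑_i p_i = 1; set α = ∑_{i=1}^n φ_i(β) p_i and w_i = (N − n) φ_i(β) p_i / α. Let β' ∈ ℝ^s satisfy ℓ₁(β') ≥ ℓ₁(β), where ℓ₁(γ) = ∑_{i=1}^n ∑_{k=1}^K [d_{ik} log g(z_{ik};γ) + (1−d_{ik}) log(1−g(z_{ik};γ)) + w_i log(1−g(z_{ik0};γ))]; set p_i' = (w_i + 1)/N and α' = ∑_{i=1}^n φ_i(β') p_i'. Let N' be any integer ≥ n maximizing M ↦ log C(M,n) + (M − n) log α' + C·f(M) over integers M ≥ n. Then ℓ̃_p(N', β', α', {p_i'}) ≥ ℓ̃_p(N, β, α, {p_i}). (EM monotonicity with N unknown.) -/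

import Mathlib

/-- Logistic capture probability `g(z;β) = exp(⟪β,z⟫)/(1 + exp(⟪β,z⟫))`. -/
noncomputable def capProb {s : ℕ} (β z : Fin s → ℝ) : ℝ :=
  Real.exp (∑ j, β j * z j) / (1 + Real.exp (∑ j, β j * z j))

/-- `φ_i(β) = ∏_{k=1}^K (1 − g(z_{ik0};β))`: probability of never being captured. -/
noncomputable def phiNever {s K : ℕ} (β : Fin s → ℝ) (z0 : Fin K → Fin s → ℝ) : ℝ :=
  ∏ k, (1 - capProb β (z0 k))

/-- The log empirical likelihood `ℓ̃_e(N, β, α, {p_i})`. -/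
noncomputable def logEL {s n K : ℕ} (d : Fin n → Fin K → Bool)
    (z : Fin n → Fin K → Fin s → ℝ) (N : ℕ) (β : Fin s → ℝ) (α : ℝ)
    (p : Fin n → ℝ) : ℝ :=
  Real.log (N.choose n) + ((N : ℝ) - n) * Real.log α + ∑ i, Real.log (p i) +
    ∑ i, ∑ k,
      (if d i k then Real.log (capProb β (z i k))
       else Real.log (1 - capProb β (z i k)))

/-- The penalty `f(N) = −(N − Ñ_c)² · 1{N > Ñ_c}`. -/
noncomputable def penalty (Nc : ℝ) (N : ℕ) : ℝ :=
  if Nc < (N : ℝ) then -(((N : ℝ) - Nc) ^ 2) else 0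

/-- The M-step objective `ℓ₁`. -/
noncomputable def ellOne {s n K : ℕ} (d : Fin n → Fin K → Bool)
    (z z0 : Fin n → Fin K → Fin s → ℝ) (w : Fin n → ℝ) (γ : Fin s → ℝ) : ℝ :=
  ∑ i, ∑ k,
    ((if d i k then Real.log (capProb γ (z i k))
      else Real.log (1 - capProb γ (z i k)))
      + w i * Real.log (1 - capProb γ (z0 i k)))

/-!
At fixed `N` this is the usual EM argument. With the posterior weights
`qᵢ = φᵢ(β) pᵢ / α`, concavity of `log` (Gibbs' inequality) gives, for every `(β'', p'')`,
`(N - n) log α'' ≥ ∑ wᵢ log (φᵢ(β'') p''ᵢ) - (N - n) ∑ qᵢ log qᵢ`, with equality at `(β, p)`.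
Hence `ℓ̃_e(N, ·)` dominates `ℓ₁(β'') + ∑ (wᵢ + 1) log p''ᵢ` up to a constant, with equality
at the current iterate, and both M-steps increase this bound: `β'` by assumption and
`p' ∝ w + 1` by Gibbs' inequality again. Step 2′ changes only `N`, and in `N` the penalized
likelihood differs from the maximised profile `M ↦ log C(M,n) + (M - n) log α' + C f(M)`
by a constant.
-/

open Real Finset

section EM

variable {ι : Type*} [Fintype ι]

theorem sum_mul_log_le_sum_mul_log_self {q x : ι → ℝ} (hq : ∀ i, 0 < q i) (hx : ∀ i, 0 < x i)
    (hxq : ∑ i, x i ≤ ∑ i, q i) :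
    ∑ i, q i * log (x i) ≤ ∑ i, q i * log (q i) := by
  have hpointwise : ∀ i, q i * log (x i) - q i * log (q i) ≤ x i - q i := fun i => by
    have hlog := log_le_sub_one_of_pos (div_pos (hx i) (hq i))
    rw [log_div (hx i).ne' (hq i).ne'] at hlog
    calc q i * log (x i) - q i * log (q i) = q i * (log (x i) - log (q i)) := by ring
      _ ≤ q i * (x i / q i - 1) := mul_le_mul_of_nonneg_left hlog (hq i).le
      _ = x i - q i := by rw [mul_sub, mul_div_cancel₀ _ (hq i).ne', mul_one]
  have hsum := sum_le_sum fun i (_ : i ∈ univ) => hpointwise i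
  simp only [sum_sub_distrib] at hsum
  linarith

theorem log_sum_sub_sum_mul_log_le [Nonempty ι] {a b : ι → ℝ} (ha : ∀ i, 0 < a i)
    (hb : ∀ i, 0 < b i) :
    log (∑ i, a i) - ∑ i, (a i / ∑ j, a j) * log (a i) ≤
      log (∑ i, b i) - ∑ i, (a i / ∑ j, a j) * log (b i) := by
  have hA : 0 < ∑ j, a j := sum_pos (fun i _ => ha i) univ_nonempty
  have hB : 0 < ∑ j, b j := sum_pos (fun i _ => hb i) univ_nonempty
  have hq1 : ∑ i, a i / ∑ j, a j = 1 := by rw [← sum_div, div_self hA.ne']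
  have hgibbs := sum_mul_log_le_sum_mul_log_self (q := fun i => a i / ∑ j, a j)
    (x := fun i => b i / ∑ j, b j) (fun i => div_pos (ha i) hA) (fun i => div_pos (hb i) hB)
    (by rw [hq1, ← sum_div, div_self hB.ne'])
  have hsplit : ∀ {c : ι → ℝ}, (∀ i, 0 < c i) →
      ∑ i, (a i / ∑ j, a j) * log (c i / ∑ j, c j) =
        ∑ i, (a i / ∑ j, a j) * log (c i) - log (∑ j, c j) := fun {c} hc => by
    have hC : 0 < ∑ j, c j := sum_pos (fun i _ => hc i) univ_nonempty
    simp only [log_div (hc _).ne' hC.ne', mul_sub, sum_sub_distrib, ← sum_mul, hq1, one_mul]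
  simp only [hsplit ha, hsplit hb] at hgibbs
  linarith

-- Both sides are `ℓ̃_e(N, ·) - ℓ₁` up to terms independent of the iterate, with `m = N - n`.
theorem em_step_le {φ φ' p p' w : ι → ℝ} {m : ℝ} (hφ : ∀ i, 0 < φ i) (hφ' : ∀ i, 0 < φ' i)
    (hp : ∀ i, 0 < p i) (hp1 : ∑ i, p i = 1) (hm : 0 ≤ m)
    (hw : ∀ i, w i = m * φ i * p i / ∑ j, φ j * p j)
    (hp' : ∀ i, p' i = (w i + 1) / (m + Fintype.card ι)) :
    m * log (∑ i, φ i * p i) + ∑ i, log (p i) - ∑ i, w i * log (φ i) ≤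
      m * log (∑ i, φ' i * p' i) + ∑ i, log (p' i) - ∑ i, w i * log (φ' i) := by
  have : Nonempty ι := (nonempty_of_sum_ne_zero (hp1 ▸ one_ne_zero)).to_type
  have hA : 0 < ∑ j, φ j * p j := sum_pos (fun i _ => mul_pos (hφ i) (hp i)) univ_nonempty
  have hc : 0 < m + Fintype.card ι := by have := Fintype.card_pos (α := ι); positivity
  have hw_eq : ∀ i, w i = m * (φ i * p i / ∑ j, φ j * p j) := fun i => by rw [hw]; ring
  have hwsum : ∑ i, w i = m := by
    rw [sum_congr rfl fun i _ => hw_eq i, ← mul_sum, ← sum_div, div_self hA.ne', mul_one]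
  have hwp' : ∀ i, w i + 1 = (m + Fintype.card ι) * p' i := fun i => by
    rw [hp', mul_div_cancel₀ _ hc.ne']
  have hp'pos : ∀ i, 0 < p' i := fun i => by
    rw [hp', hw_eq]
    exact div_pos (add_pos_of_nonneg_of_pos
      (mul_nonneg hm (div_pos (mul_pos (hφ i) (hp i)) hA).le) one_pos) hc
  have hp'1 : ∑ i, p' i = 1 := by
    simp only [hp', ← sum_div, sum_add_distrib, hwsum, sum_const, card_univ, nsmul_one]
    exact div_self hc.ne'
  have hE := mul_le_mul_of_nonneg_left
    (log_sum_sub_sum_mul_log_le (fun i => mul_pos (hφ i) (hp i))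
      (fun i => mul_pos (hφ' i) (hp'pos i))) hm
  have hM := mul_le_mul_of_nonneg_left
    (sum_mul_log_le_sum_mul_log_self hp'pos hp (by rw [hp1, hp'1])) hc.le
  have hEw : ∀ x : ι → ℝ,
      m * ∑ i, (φ i * p i / ∑ j, φ j * p j) * x i = ∑ i, w i * x i := fun x => by
    simp only [mul_sum, hw_eq, mul_assoc]
  have hMw : ∀ x : ι → ℝ,
      (m + Fintype.card ι) * ∑ i, p' i * x i = ∑ i, w i * x i + ∑ i, x i := fun x => by
    simp only [mul_sum, ← mul_assoc, ← hwp', add_mul, one_mul, sum_add_distrib]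
  rw [mul_sub, mul_sub, hEw, hEw] at hE
  rw [hMw, hMw] at hM
  simp only [log_mul (hφ _).ne' (hp _).ne', log_mul (hφ' _).ne' (hp'pos _).ne', mul_add,
    sum_add_distrib] at hE
  linarith

end EM

section CaptureRecapture

variable {s n K : ℕ}

noncomputable def obsLogLik (d : Fin n → Fin K → Bool) (z : Fin n → Fin K → Fin s → ℝ)
    (γ : Fin s → ℝ) : ℝ :=
  ∑ i, ∑ k,
    (if d i k then log (capProb γ (z i k)) else log (1 - capProb γ (z i k)))

theorem one_sub_capProb_pos (β z : Fin s → ℝ) : 0 < 1 - capProb β z := by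
  have hlt : capProb β z < 1 := by
    rw [capProb, div_lt_one (by positivity)]
    exact lt_one_add _
  linarith

theorem phiNever_pos (β : Fin s → ℝ) (z0 : Fin K → Fin s → ℝ) : 0 < phiNever β z0 :=
  prod_pos fun k _ => one_sub_capProb_pos β (z0 k)

theorem log_phiNever (β : Fin s → ℝ) (z0 : Fin K → Fin s → ℝ) :
    log (phiNever β z0) = ∑ k, log (1 - capProb β (z0 k)) :=
  log_prod fun k _ => (one_sub_capProb_pos β (z0 k)).ne'

theorem ellOne_eq (d : Fin n → Fin K → Bool) (z z0 : Fin n → Fin K → Fin s → ℝ)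
    (w : Fin n → ℝ) (γ : Fin s → ℝ) :
    ellOne d z z0 w γ = obsLogLik d z γ + ∑ i, w i * log (phiNever γ (z0 i)) := by
  simp only [ellOne, obsLogLik, log_phiNever, mul_sum, ← sum_add_distrib]

theorem logEL_le_logEL_of_emStep (d : Fin n → Fin K → Bool) (z z0 : Fin n → Fin K → Fin s → ℝ)
    {N : ℕ} (hN : n ≤ N) {β β' : Fin s → ℝ} {p p' w : Fin n → ℝ} {α α' : ℝ}
    (hp : ∀ i, 0 < p i) (hp1 : ∑ i, p i = 1) (hα : α = ∑ i, phiNever β (z0 i) * p i)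
    (hw : ∀ i, w i = ((N : ℝ) - n) * phiNever β (z0 i) * p i / α)
    (hβ' : ellOne d z z0 w β ≤ ellOne d z z0 w β')
    (hp' : ∀ i, p' i = (w i + 1) / (N : ℝ)) (hα' : α' = ∑ i, phiNever β' (z0 i) * p' i) :
    logEL d z N β α p ≤ logEL d z N β' α' p' := by
  subst hα hα'
  have hstep := em_step_le (p' := p') (fun i => phiNever_pos β (z0 i))
    (fun i => phiNever_pos β' (z0 i)) hp hp1 (sub_nonneg.mpr (Nat.cast_le.mpr hN)) hw
    (fun i => by rw [hp' i, Fintype.card_fin, sub_add_cancel])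
  rw [ellOne_eq, ellOne_eq] at hβ'
  rw [logEL, logEL]
  unfold obsLogLik at hβ'
  linarith

end CaptureRecapture

theorem stmt10_general (s n K : ℕ)
    (d : Fin n → Fin K → Bool) (z z0 : Fin n → Fin K → Fin s → ℝ)
    (N : ℕ) (hN : n ≤ N) (β : Fin s → ℝ)
    (p : Fin n → ℝ) (hp : ∀ i, 0 < p i) (hp1 : ∑ i, p i = 1)
    (α : ℝ) (hα : α = ∑ i, phiNever β (z0 i) * p i)
    (w : Fin n → ℝ) (hw : ∀ i, w i = ((N : ℝ) - n) * phiNever β (z0 i) * p i / α)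
    (β' : Fin s → ℝ) (hβ' : ellOne d z z0 w β ≤ ellOne d z z0 w β')
    (p' : Fin n → ℝ) (hp' : ∀ i, p' i = (w i + 1) / (N : ℝ))
    (α' : ℝ) (hα' : α' = ∑ i, phiNever β' (z0 i) * p' i)
    (Ct : ℝ) (Nc : ℝ)
    (N' : ℕ)
    (hmax : ∀ M : ℕ, n ≤ M →
      Real.log (M.choose n) + ((M : ℝ) - n) * Real.log α' + Ct * penalty Nc M ≤
      Real.log (N'.choose n) + ((N' : ℝ) - n) * Real.log α' + Ct * penalty Nc N') :
    logEL d z N β α p + Ct * penalty Nc N ≤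
      logEL d z N' β' α' p' + Ct * penalty Nc N' := by
  have hstep := logEL_le_logEL_of_emStep d z z0 hN hp hp1 hα hw hβ' hp' hα'
  have hprofile := hmax N hN
  rw [logEL, logEL] at hstep ⊢
  linarith

/-- EM monotonicity with `N` unknown.  One EM iteration — E-step
weights `w_i = (N−n)φ_i(β)p_i/α` with `α = ∑ φ_i(β)p_i`, any `β'` with
`ℓ₁(β') ≥ ℓ₁(β)`, update `p_i' = (w_i+1)/N`, `α' = ∑ φ_i(β')p_i'`, and then
step 2′, replacing `N` by any integer `N' ≥ n` maximizing
`M ↦ log C(M,n) + (M−n) log α' + C·f(M)` over integers `M ≥ n` — does not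
decrease the penalized log empirical likelihood `ℓ̃_p = ℓ̃_e + C·f(N)`. -/
theorem stmt10 (s n K : ℕ) (hs : 0 < s) (hn : 0 < n) (hK : 0 < K)
    (d : Fin n → Fin K → Bool) (z z0 : Fin n → Fin K → Fin s → ℝ)
    (hcap : ∀ i, ∃ k, d i k = true)
    (N : ℕ) (hN : n ≤ N) (β : Fin s → ℝ)
    (p : Fin n → ℝ) (hp : ∀ i, 0 < p i) (hp1 : ∑ i, p i = 1)
    (α : ℝ) (hα : α = ∑ i, phiNever β (z0 i) * p i)
    (w : Fin n → ℝ) (hw : ∀ i, w i = ((N : ℝ) - n) * phiNever β (z0 i) * p i / α)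
    (β' : Fin s → ℝ) (hβ' : ellOne d z z0 w β ≤ ellOne d z z0 w β')
    (p' : Fin n → ℝ) (hp' : ∀ i, p' i = (w i + 1) / (N : ℝ))
    (α' : ℝ) (hα' : α' = ∑ i, phiNever β' (z0 i) * p' i)
    (Ct : ℝ) (hCt : 0 ≤ Ct) (Nc : ℝ)
    (N' : ℕ) (hN' : n ≤ N')
    (hmax : ∀ M : ℕ, n ≤ M →
      Real.log (M.choose n) + ((M : ℝ) - n) * Real.log α' + Ct * penalty Nc M ≤
      Real.log (N'.choose n) + ((N' : ℝ) - n) * Real.log α' + Ct * penalty Nc N') :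
    logEL d z N β α p + Ct * penalty Nc N ≤
      logEL d z N' β' α' p' + Ct * penalty Nc N' :=
  stmt10_general s n K d z z0 N hN β p hp hp1 α hα w hw β' hβ' p' hp' α' hα' Ct Nc N' hmax
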